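/- arXiv:1507.01988 — 4 statements merged into one kernel-verified Lean document; each statement's English description precedes it below -/
import Mathlib

section
/- Let p be prime and let j be an integer not divisible by p. If k is chosen uniformly at random from {1, …, p−1}, then the probability that the fractional part of jk/p lies in [1/8, 3/8] ∪ [5/8, 7/8] is at least (p−1)/2 / (p−1) − 2/(p−1); in particular for p ≥ 9, with probability at least 1/4, cos²(2πjk/p) ≤ 1/2. -/
open Real Finset

/-!
Since `p` is prime and `p ∤ j`, multiplication by `j` permutes the nonzero residues mod `p`, so as
`k` runs over `1, …, p - 1` the fractional parts of `j k / p` are the numbers `r / p`,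
`1 ≤ r ≤ p - 1`, in some order. At least `(p - 5) / 2` of them satisfy `8 r ∈ [p, 3p] ∪ [5p, 7p]`,
and for those `cos² (2π r / p) = (1 + cos (4π r / p)) / 2 ≤ 1 / 2`, because `4π r / p` lies in
`[π/2, 3π/2]` modulo `2π`.
-/

lemma cos_sq_le_half_iff_cos_two_mul_nonpos (x : ℝ) : cos x ^ 2 ≤ 1 / 2 ↔ cos (2 * x) ≤ 0 := by
  rw [cos_sq]
  constructor <;> intro h <;> linarith

lemma cos_two_pi_mul_sq_le_half_of_fract_mem {y : ℝ}
    (hy : Int.fract y ∈ Set.Icc (1/8 : ℝ) (3/8) ∪ Set.Icc (5/8 : ℝ) (7/8)) :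
    cos (2 * π * y) ^ 2 ≤ 1 / 2 := by
  have hperiod : cos (2 * (2 * π * y)) = cos (2 * (2 * π * Int.fract y)) := by
    rw [Int.fract, show 2 * (2 * π * (y - ⌊y⌋)) = 2 * (2 * π * y) - (2 * ⌊y⌋ : ℤ) * (2 * π) by
      push_cast; ring, cos_sub_int_mul_two_pi]
  have := pi_pos
  rw [cos_sq_le_half_iff_cos_two_mul_nonpos, hperiod]
  rcases hy with ⟨h₁, h₂⟩ | ⟨h₁, h₂⟩
  · exact cos_nonpos_of_pi_div_two_le_of_le (by nlinarith) (by nlinarith)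
  · rw [← cos_sub_two_pi]
    exact cos_nonpos_of_pi_div_two_le_of_le (by nlinarith) (by nlinarith)

lemma Int.fract_intCast_div_eq_val {n : ℕ} [NeZero n] (a : ℤ) :
    Int.fract ((a : ℝ) / n) = ((a : ZMod n).val : ℝ) / n := by
  rw [Int.fract_div_intCast_eq_div_intCast_mod, ← ZMod.val_intCast, Int.cast_natCast]

lemma ZMod.val_mem_Icc_of_ne_zero {p : ℕ} [NeZero p] {x : ZMod p} (hx : x ≠ 0) :
    x.val ∈ Icc 1 (p - 1) := by
  have := x.val_lt
  have := (ZMod.val_ne_zero x).2 hx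
  rw [mem_Icc]; omega

lemma ZMod.natCast_ne_zero_of_mem_Icc {p : ℕ} {k : ℕ} (hk : k ∈ Icc 1 (p - 1)) :
    (k : ZMod p) ≠ 0 := by
  rw [mem_Icc] at hk
  rw [Ne, ZMod.natCast_eq_zero_iff]
  exact Nat.not_dvd_of_pos_of_lt (by omega) (by omega)

lemma ZMod.val_natCast_of_mem_Icc {p : ℕ} {k : ℕ} (hk : k ∈ Icc 1 (p - 1)) :
    (k : ZMod p).val = k := by
  rw [mem_Icc] at hk
  exact ZMod.val_cast_of_lt (by omega)

lemma ZMod.card_filter_Icc_val_mul {p : ℕ} [Fact p.Prime] {a : ZMod p} (ha : a ≠ 0)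
    (P : ℕ → Prop) [DecidablePred P] :
    #{k ∈ Icc 1 (p - 1) | P (a * (k : ℕ)).val} = #{r ∈ Icc 1 (p - 1) | P r} := by
  refine card_nbij' (fun k => (a * k).val) (fun r => (a⁻¹ * r).val) ?_ ?_ ?_ ?_
  · intro k hk
    simp only [coe_filter] at hk ⊢
    exact ⟨ZMod.val_mem_Icc_of_ne_zero
      (mul_ne_zero ha (ZMod.natCast_ne_zero_of_mem_Icc hk.1)), hk.2⟩
  · intro r hr
    simp only [coe_filter] at hr ⊢
    refine ⟨ZMod.val_mem_Icc_of_ne_zero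
      (mul_ne_zero (inv_ne_zero ha) (ZMod.natCast_ne_zero_of_mem_Icc hr.1)), ?_⟩
    rw [ZMod.natCast_zmod_val, mul_inv_cancel_left₀ ha, ZMod.val_natCast_of_mem_Icc hr.1]
    exact hr.2
  · intro k hk
    simp only [ZMod.natCast_zmod_val, inv_mul_cancel_left₀ ha]
    exact ZMod.val_natCast_of_mem_Icc (mem_filter.1 hk).1
  · intro r hr
    simp only [ZMod.natCast_zmod_val, mul_inv_cancel_left₀ ha]
    exact ZMod.val_natCast_of_mem_Icc (mem_filter.1 hr).1

lemma card_filter_Icc_fract_intCast_mul_div {p : ℕ} [Fact p.Prime] {j : ℤ}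
    (hj : (j : ZMod p) ≠ 0) (P : ℝ → Prop) [DecidablePred P] :
    #{k ∈ Icc 1 (p - 1) | P (Int.fract ((j : ℝ) * (k : ℕ) / p))} =
      #{r ∈ Icc 1 (p - 1) | P ((r : ℕ) / p : ℝ)} := by
  refine Eq.trans (congrArg card (filter_congr fun k _ => ?_))
    (ZMod.card_filter_Icc_val_mul hj fun r => P ((r : ℝ) / p))
  rw [show (j * k : ℝ) = ((j * k : ℤ) : ℝ) by push_cast; ring, Int.fract_intCast_div_eq_val]
  push_cast
  rfl

lemma div_mem_eighths_iff {p : ℕ} (hp : 0 < p) (r : ℕ) :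
    (r : ℝ) / p ∈ Set.Icc (1/8 : ℝ) (3/8) ∪ Set.Icc (5/8 : ℝ) (7/8) ↔
      p ≤ 8 * r ∧ 8 * r ≤ 3 * p ∨ 5 * p ≤ 8 * r ∧ 8 * r ≤ 7 * p := by
  have hp' : (0 : ℝ) < p := by exact_mod_cast hp
  simp only [Set.mem_union, Set.mem_Icc, le_div_iff₀ hp', div_le_iff₀ hp',
    ← Nat.cast_le (α := ℝ), Nat.cast_mul, Nat.cast_ofNat]
  constructor <;> rintro (⟨h₁, h₂⟩ | ⟨h₁, h₂⟩)
  all_goals first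
    | exact Or.inl ⟨by linarith, by linarith⟩
    | exact Or.inr ⟨by linarith, by linarith⟩

lemma le_two_mul_card_filter_eighths {p : ℕ} (hp : 0 < p) :
    p ≤ 2 * #{r ∈ Icc 1 (p - 1) | p ≤ 8 * r ∧ 8 * r ≤ 3 * p ∨ 5 * p ≤ 8 * r ∧ 8 * r ≤ 7 * p}
      + 5 := by
  -- `(a + 7) / 8 = ⌈a / 8⌉`
  have hsub : Icc ((p + 7) / 8) (3 * p / 8) ∪ Icc ((5 * p + 7) / 8) (7 * p / 8) ⊆
      {r ∈ Icc 1 (p - 1) | p ≤ 8 * r ∧ 8 * r ≤ 3 * p ∨ 5 * p ≤ 8 * r ∧ 8 * r ≤ 7 * p} := by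
    intro r hr
    simp only [mem_union, mem_Icc, mem_filter] at hr ⊢
    omega
  have hdisj : Disjoint (Icc ((p + 7) / 8) (3 * p / 8)) (Icc ((5 * p + 7) / 8) (7 * p / 8)) := by
    rw [disjoint_left]
    intro r hr hr'
    rw [mem_Icc] at hr hr'
    omega
  have := card_le_card hsub
  rw [card_union_of_disjoint hdisj, Nat.card_Icc, Nat.card_Icc] at this
  omega

theorem stmt_3 (p : ℕ) (hp : p.Prime) (j : ℤ) (hj : ¬ (p : ℤ) ∣ j) :
    (((Finset.Icc 1 (p - 1)).filter (fun k : ℕ =>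
        Int.fract ((j * k : ℝ) / p) ∈
          Set.Icc (1/8 : ℝ) (3/8) ∪ Set.Icc (5/8 : ℝ) (7/8))).card : ℝ) / (p - 1)
      ≥ ((p - 1 : ℝ) / 2) / (p - 1) - 2 / (p - 1) ∧
    (9 ≤ p →
      (((Finset.Icc 1 (p - 1)).filter (fun k : ℕ =>
          Real.cos (2 * π * j * k / p) ^ 2 ≤ 1/2)).card : ℝ) / (p - 1) ≥ 1/4) := by
  have := Fact.mk hp
  have hj' : (j : ZMod p) ≠ 0 := by rwa [Ne, ZMod.intCast_zmod_eq_zero_iff_dvd]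
  have hcount : (p : ℝ) ≤ 2 * #{k ∈ Icc 1 (p - 1) | Int.fract ((j : ℝ) * (k : ℕ) / p) ∈
      Set.Icc (1/8 : ℝ) (3/8) ∪ Set.Icc (5/8 : ℝ) (7/8)} + 5 := by
    rw [card_filter_Icc_fract_intCast_mul_div hj'
        (· ∈ Set.Icc (1/8 : ℝ) (3/8) ∪ Set.Icc (5/8 : ℝ) (7/8)),
      filter_congr fun r _ => div_mem_eighths_iff hp.pos r]
    exact_mod_cast le_two_mul_card_filter_eighths hp.pos
  have hcos : (#{k ∈ Icc 1 (p - 1) | Int.fract ((j : ℝ) * (k : ℕ) / p) ∈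
      Set.Icc (1/8 : ℝ) (3/8) ∪ Set.Icc (5/8 : ℝ) (7/8)} : ℝ) ≤
      #{k ∈ Icc 1 (p - 1) | cos (2 * π * j * (k : ℕ) / p) ^ 2 ≤ 1/2} := by
    refine Nat.cast_le.2 <| card_le_card (monotone_filter_right _ fun k _ hk => ?_)
    rw [mul_assoc _ (j : ℝ), mul_div_assoc]
    exact cos_two_pi_mul_sq_le_half_of_fract_mem hk
  have hp1 : (0 : ℝ) < p - 1 := by linarith [(Nat.one_lt_cast (α := ℝ)).2 hp.one_lt]
  refine ⟨?_, fun hp9 => ?_⟩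
  · rw [ge_iff_le, ← sub_div, div_le_div_iff_of_pos_right hp1]
    linarith
  · have : (9 : ℝ) ≤ p := by exact_mod_cast hp9
    rw [ge_iff_le, le_div_iff₀ hp1]
    linarith
end

section
/- For every nonzero integer n, sin²(√2 π n) ≥ 1/(2n²). -/
open Real

/-!
Let `x = √2 n`, `m = round x` and `d = x - m`, so `|d| ≤ 1/2`. Since `√2` is irrational,
`2n² - m² = (x - m)(x + m)` is a nonzero integer, whence `1 ≤ |d| |x + m| ≤ 4 |n| |d|`.
On the other hand `sin² (π x) = sin² (π d)`, and concavity of `sin` on `[0, π/4]` together with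
monotonicity on `[π/4, π/2]` give `sin² (π d) ≥ min (8 d²) (1/2)`; both terms are at least `1/(2n²)`.
-/

lemma two_mul_sqrt_two_mul_le_sin_pi_mul {t : ℝ} (ht₀ : 0 ≤ t) (ht : t ≤ 1 / 4) :
    2 * √2 * t ≤ sin (π * t) := by
  have hchord := strictConcaveOn_sin_Icc.concaveOn.2 (Set.left_mem_Icc.2 pi_pos.le)
    (show π / 4 ∈ Set.Icc 0 π from ⟨by positivity, by linarith [pi_pos]⟩)
    (show 0 ≤ 1 - 4 * t by linarith) (show 0 ≤ 4 * t by positivity) (by ring)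
  simp only [smul_eq_mul, mul_zero, zero_add, sin_zero, sin_pi_div_four] at hchord
  rw [show π * t = 4 * t * (π / 4) by ring]
  linarith

lemma min_le_sin_pi_mul_sq_of_nonneg {t : ℝ} (ht₀ : 0 ≤ t) (ht : t ≤ 1 / 2) :
    min (8 * t ^ 2) (1 / 2) ≤ sin (π * t) ^ 2 := by
  have hsqrt : √2 ^ 2 = 2 := sq_sqrt zero_le_two
  rcases le_total t (1 / 4) with hsmall | hlarge
  · have := two_mul_sqrt_two_mul_le_sin_pi_mul ht₀ hsmall
    calc min (8 * t ^ 2) (1 / 2) ≤ (2 * √2 * t) ^ 2 := by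
          rw [mul_pow, mul_pow, hsqrt]; exact min_le_of_left_le (by norm_num)
      _ ≤ sin (π * t) ^ 2 := by gcongr
  · have : sin (π / 4) ≤ sin (π * t) :=
      sin_le_sin_of_le_of_le_pi_div_two (by linarith [pi_pos]) (by nlinarith [pi_pos])
        (by nlinarith [pi_pos])
    rw [sin_pi_div_four] at this
    calc min (8 * t ^ 2) (1 / 2) ≤ (√2 / 2) ^ 2 := by
          rw [div_pow, hsqrt]; exact min_le_of_right_le (by norm_num)
      _ ≤ sin (π * t) ^ 2 := by gcongr

lemma min_le_sin_pi_mul_sq (y : ℝ) :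
    min (8 * (y - round y) ^ 2) (1 / 2) ≤ sin (π * y) ^ 2 := by
  set d := y - round y with hd
  have hperiod : |sin (π * y)| = |sin (π * |d|)| := by
    have : π * y = π * d + round y * π := by rw [hd]; ring
    rw [this, sin_add_int_mul_pi, abs_mul, abs_neg_one_zpow, one_mul]
    rcases abs_choice d with h | h <;> simp [h]
  rw [← sq_abs (sin _), hperiod, sq_abs, ← sq_abs d]
  exact min_le_sin_pi_mul_sq_of_nonneg (abs_nonneg d) (abs_sub_round y)

lemma one_le_abs_two_mul_sq_sub_sq {n : ℤ} (hn : n ≠ 0) (m : ℤ) : 1 ≤ |2 * n ^ 2 - m ^ 2| := by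
  refine Int.one_le_abs (sub_ne_zero.2 fun h => irrational_sqrt_two ⟨|m| / |n|, ?_⟩)
  push_cast
  rw [eq_comm, sqrt_eq_iff_eq_sq zero_le_two (by positivity), div_pow, sq_abs, sq_abs,
    eq_div_iff (by positivity)]
  exact_mod_cast h

lemma one_le_four_mul_abs_mul_abs_sqrt_two_mul_sub_round {n : ℤ} (hn : n ≠ 0) :
    1 ≤ 4 * |(n : ℝ)| * |√2 * n - round (√2 * n)| := by
  set m := round (√2 * n)
  set d := √2 * n - m with hd
  have hsqrt : √2 ^ 2 = 2 := sq_sqrt zero_le_two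
  have hsqrt_le : √2 ≤ 7 / 4 := by nlinarith [sqrt_nonneg 2]
  have hn₁ : (1 : ℝ) ≤ |(n : ℝ)| := by rw [← Int.cast_abs]; exact_mod_cast Int.one_le_abs hn
  have hfactor : |d| * |√2 * n + m| = |(2 * n ^ 2 - m ^ 2 : ℤ)| := by
    rw [← abs_mul, hd]; push_cast; congr 1; linear_combination (n : ℝ) ^ 2 * hsqrt
  have hsum : |√2 * n + m| ≤ 4 * |(n : ℝ)| :=
    calc |√2 * n + m| = |2 * √2 * n - d| := by rw [hd]; ring_nf
      _ ≤ 2 * √2 * |(n : ℝ)| + 1 / 2 := by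
        refine (abs_sub _ _).trans (add_le_add ?_ (abs_sub_round _))
        rw [abs_mul, abs_of_pos (by positivity)]
      _ ≤ 4 * |(n : ℝ)| := by nlinarith
  calc (1 : ℝ) ≤ |(2 * n ^ 2 - m ^ 2 : ℤ)| := by exact_mod_cast one_le_abs_two_mul_sq_sub_sq hn m
    _ = |d| * |√2 * n + m| := hfactor.symm
    _ ≤ |d| * (4 * |(n : ℝ)|) := by gcongr
    _ = 4 * |(n : ℝ)| * |d| := by ring

theorem stmt_13 (n : ℤ) (hn : n ≠ 0) :
    Real.sin (Real.sqrt 2 * π * n) ^ 2 ≥ 1 / (2 * (n : ℝ) ^ 2) := by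
  have hn₁ : (1 : ℝ) ≤ (n : ℝ) ^ 2 := by
    exact_mod_cast (one_le_sq_iff_one_le_abs n).2 (Int.one_le_abs hn)
  have hdist := one_le_pow₀ (n := 2) (one_le_four_mul_abs_mul_abs_sqrt_two_mul_sub_round hn)
  rw [mul_pow, mul_pow, sq_abs, sq_abs] at hdist
  calc 1 / (2 * (n : ℝ) ^ 2) ≤ min (8 * (√2 * n - round (√2 * n)) ^ 2) (1 / 2) := by
        refine le_min ?_ (by gcongr; linarith)
        rw [div_le_iff₀ (by positivity)]
        linarith
    _ ≤ sin (π * (√2 * n)) ^ 2 := min_le_sin_pi_mul_sq _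
    _ = sin (√2 * π * n) ^ 2 := by ring_nf
end

section
/- Let U_a = (1/5)·[[4,3,0],[−3,4,0],[0,0,5]] and U_b = (1/5)·[[4,0,3],[0,5,0],[−3,0,4]]. Both matrices are orthogonal (real unitary). Moreover, for any word w = w₁…w_n ∈ {a,b}^* the vector U_{w_n}⋯U_{w_1} e₁ has all coordinates in (1/5^n)·ℤ, i.e., 5^n · U_{w_n}⋯U_{w_1} e₁ is an integer vector. -/
open Matrix

/-- The matrix applied by the palindrome 2QCFA on letter `a`. -/
noncomputable def Ua : Matrix (Fin 3) (Fin 3) ℝ :=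
  (1/5 : ℝ) • !![4, 3, 0; -3, 4, 0; 0, 0, 5]

/-- The matrix applied by the palindrome 2QCFA on letter `b`. -/
noncomputable def Ub : Matrix (Fin 3) (Fin 3) ℝ :=
  (1/5 : ℝ) • !![4, 0, 3; 0, 5, 0; -3, 0, 4]

lemma step_aux (M : Matrix (Fin 3) (Fin 3) ℝ) (Mz : Matrix (Fin 3) (Fin 3) ℤ)
    (hM : ∀ i j, M i j = (Mz i j : ℝ)) (v : Fin 3 → ℝ) (n : ℕ) (z : Fin 3 → ℤ)
    (hz : ∀ i, (5:ℝ)^n * v i = (z i : ℝ)) :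
    ∀ i, (5:ℝ)^(n+1) * (((1/5:ℝ) • M).mulVec v) i = ((∑ j, Mz i j * z j : ℤ) : ℝ) := by
  intro i
  have : (((1/5:ℝ) • M).mulVec v) i = (1/5:ℝ) * (M.mulVec v i) := by
    simp [Matrix.smul_mulVec]
  rw [this]
  have h5 : (5:ℝ)^(n+1) * ((1/5:ℝ) * (M.mulVec v i)) = (5:ℝ)^n * (M.mulVec v i) := by
    ring
  rw [h5, Matrix.mulVec, dotProduct, Finset.mul_sum]
  push_cast
  apply Finset.sum_congr rfl
  intro j _
  rw [hM i j]
  rw [show (5:ℝ)^n * ((Mz i j : ℝ) * v j) = (Mz i j : ℝ) * ((5:ℝ)^n * v j) by ring, hz j]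

theorem stmt_14 :
    Ua * Uaᵀ = 1 ∧ Ub * Ubᵀ = 1 ∧
    ∀ w : List Bool,
      ∃ z : Fin 3 → ℤ,
        ∀ i, (5 : ℝ) ^ w.length *
          (((w.map (fun c => if c = true then Ua else Ub)).reverse.prod).mulVec
            ![1, 0, 0]) i = (z i : ℝ) := by
  refine ⟨?_, ?_, ?_⟩
  · ext i j
    fin_cases i <;> fin_cases j <;>
      simp [Ua, Matrix.mul_apply, Fin.sum_univ_three, Matrix.one_apply, Matrix.transpose_apply, Matrix.vecHead, Matrix.vecTail] <;> norm_num
  · ext i j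
    fin_cases i <;> fin_cases j <;>
      simp [Ub, Matrix.mul_apply, Fin.sum_univ_three, Matrix.one_apply, Matrix.transpose_apply, Matrix.vecHead, Matrix.vecTail] <;> norm_num
  · intro w
    induction w using List.reverseRecOn with
    | nil =>
      refine ⟨![1,0,0], ?_⟩
      intro i
      fin_cases i <;> simp [Matrix.mulVec, dotProduct, Fin.sum_univ_three]
    | append_singleton l c ih =>
      obtain ⟨z, hz⟩ := ih
      have hlen : (l ++ [c]).length = l.length + 1 := by simp
      have hprod : ((l ++ [c]).map (fun c => if c = true then Ua else Ub)).reverse.prod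
          = (if c = true then Ua else Ub) *
            ((l.map (fun c => if c = true then Ua else Ub)).reverse.prod) := by
        simp
      rw [hlen, hprod]
      set P := (l.map (fun c => if c = true then Ua else Ub)).reverse.prod
      cases c
      · refine ⟨fun i => ∑ j, (!![4, 0, 3; 0, 5, 0; -3, 0, 4] : Matrix (Fin 3) (Fin 3) ℤ) i j * z j, ?_⟩
        intro i
        have := step_aux !![4, 0, 3; 0, 5, 0; -3, 0, 4]
          !![4, 0, 3; 0, 5, 0; -3, 0, 4]
          (by intro i j; fin_cases i <;> fin_cases j <;> norm_num)
          (P.mulVec ![1,0,0]) l.length z hz i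
        simpa [Ub, Matrix.mulVec_mulVec] using this
      · refine ⟨fun i => ∑ j, (!![4, 3, 0; -3, 4, 0; 0, 0, 5] : Matrix (Fin 3) (Fin 3) ℤ) i j * z j, ?_⟩
        intro i
        have := step_aux !![4, 3, 0; -3, 4, 0; 0, 0, 5]
          !![4, 3, 0; -3, 4, 0; 0, 0, 5]
          (by intro i j; fin_cases i <;> fin_cases j <;> norm_num)
          (P.mulVec ![1,0,0]) l.length z hz i
        simpa [Ua, Matrix.mulVec_mulVec] using this
end

section
/- Two generalized finite automata (GFAs) G₁ and G₂ with n₁ and n₂ states respectively are equivalent (assign the same value to every word) if and only if they assign the same value to every word of length at most n₁ + n₂ − 1. -/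
/-!
Run both automata in parallel on the direct sum `ℝ^{n₁} × ℝ^{n₂}`, and let `V_ℓ` be the span of the
state vectors reached by words of length at most `ℓ`. Since `V_{ℓ+1}` is determined by `V_ℓ`
(it is spanned by the initial vector and the images of `V_ℓ` under the transition maps), the chain
`V_0 ≤ V_1 ≤ ⋯` is constant from its first repetition on. Each strict step raises the dimension,
and `V_0` has dimension one unless the initial vector vanishes (then every state vanishes), so the
chain is constant from `V_{n₁+n₂-1}` on. The difference of the two values is a linear functional
of the state vector; if it vanishes on `V_{n₁+n₂-1}` it vanishes on every reachable state.
-/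

open Matrix

/-- The value assigned by a generalized finite automaton (GFA) with `n` states,
initial vector `init`, transition matrices `A`, and final vector `f`, to the
word `w = w₁…w_k`: it is `fᵀ A_{w_k} ⋯ A_{w_1} init`. -/
def GFA.value {α : Type} (n : ℕ) (init : Fin n → ℝ)
    (A : α → Matrix (Fin n) (Fin n) ℝ) (f : Fin n → ℝ) (w : List α) : ℝ :=
  f ⬝ᵥ ((w.map A).reverse.prod).mulVec init

open Module Submodule

section WordSpan

variable {α M : Type*} (K : Type*) [DivisionRing K] [AddCommGroup M] [Module K M]

def wordSpan (v : List α → M) (ℓ : ℕ) : Submodule K M :=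
  span K (v '' {w | w.length ≤ ℓ})

variable {K}

theorem mem_wordSpan {v : List α → M} {w : List α} {ℓ : ℕ} (hw : w.length ≤ ℓ) :
    v w ∈ wordSpan K v ℓ :=
  subset_span ⟨w, hw, rfl⟩

theorem wordSpan_le_iff {v : List α → M} {ℓ : ℕ} {P : Submodule K M} :
    wordSpan K v ℓ ≤ P ↔ ∀ w : List α, w.length ≤ ℓ → v w ∈ P := by
  simp [wordSpan, span_le, Set.subset_def]

theorem wordSpan_mono (v : List α → M) : Monotone (wordSpan K v) :=
  fun _ _ h => span_mono (Set.image_mono fun _ hw => le_trans hw h)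

variable {v : List α → M} {T : α → M →ₗ[K] M}

theorem map_wordSpan_le (hv : ∀ w σ, v (w ++ [σ]) = T σ (v w)) (σ : α) (ℓ : ℕ) :
    (wordSpan K v ℓ).map (T σ) ≤ wordSpan K v (ℓ + 1) := by
  rw [wordSpan, map_span, span_le]
  rintro _ ⟨_, ⟨w, hw, rfl⟩, rfl⟩
  rw [← hv]
  exact mem_wordSpan (by simpa using hw)

theorem wordSpan_succ_succ_le (hv : ∀ w σ, v (w ++ [σ]) = T σ (v w)) {k : ℕ}
    (hk : wordSpan K v (k + 1) ≤ wordSpan K v k) :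
    wordSpan K v (k + 2) ≤ wordSpan K v (k + 1) := by
  refine wordSpan_le_iff.mpr fun w hw => ?_
  rcases List.eq_nil_or_concat w with rfl | ⟨u, σ, rfl⟩
  · exact mem_wordSpan (Nat.zero_le _)
  · rw [List.concat_eq_append, hv]
    have hu : v u ∈ wordSpan K v k := hk (mem_wordSpan (by simpa using hw))
    exact map_wordSpan_le hv σ k ⟨v u, hu, rfl⟩

theorem wordSpan_antitone_of_succ_le (hv : ∀ w σ, v (w ++ [σ]) = T σ (v w)) {k : ℕ}
    (hk : wordSpan K v (k + 1) ≤ wordSpan K v k) :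
    Antitone fun j => wordSpan K v (k + j) := by
  refine antitone_nat_of_succ_le fun j => ?_
  induction j with
  | zero => exact hk
  | succ j ih => exact wordSpan_succ_succ_le hv ih

theorem mem_wordSpan_of_succ_le (hv : ∀ w σ, v (w ++ [σ]) = T σ (v w)) {k : ℕ}
    (hk : wordSpan K v (k + 1) ≤ wordSpan K v k) (w : List α) : v w ∈ wordSpan K v k :=
  wordSpan_antitone_of_succ_le hv hk (Nat.zero_le (w.length - k)) (mem_wordSpan (by omega))

end WordSpan

section Chain

variable {K M : Type*} [DivisionRing K] [AddCommGroup M] [Module K M] [FiniteDimensional K M]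

theorem Submodule.finrank_add_le_of_forall_lt {W : ℕ → Submodule K M} {m : ℕ}
    (h : ∀ k < m, W k < W (k + 1)) : finrank K (W 0) + m ≤ finrank K (W m) := by
  induction m with
  | zero => simp
  | succ m ih =>
    have hlt := finrank_lt_finrank_of_lt (h m (by omega))
    have hle := ih fun k hk => h k (by omega)
    omega

theorem Submodule.exists_succ_le_of_monotone {W : ℕ → Submodule K M} (hW : Monotone W) :
    ∃ k ≤ finrank K M - finrank K (W 0), W (k + 1) ≤ W k := by
  by_contra! h
  have hgrow := finrank_add_le_of_forall_lt (m := finrank K M - finrank K (W 0) + 1)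
    fun k hk => lt_of_le_not_ge (hW k.le_succ) (h k (by omega))
  have := (W 0).finrank_le
  have := (W (finrank K M - finrank K (W 0) + 1)).finrank_le
  omega

end Chain

theorem forall_mem_of_forall_length_le {α K M : Type*} [DivisionRing K] [AddCommGroup M]
    [Module K M] [FiniteDimensional K M] {v : List α → M} {T : α → M →ₗ[K] M}
    (hv : ∀ w σ, v (w ++ [σ]) = T σ (v w)) {P : Submodule K M}
    (h : ∀ w : List α, w.length ≤ finrank K M - 1 → v w ∈ P) (w : List α) : v w ∈ P := by
  by_cases h0 : v [] = 0
  · have hzero : ∀ w, v w = 0 := fun w => by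
      induction w using List.reverseRecOn with
      | nil => exact h0
      | append_singleton u σ ih => rw [hv, ih, map_zero]
    simp [hzero]
  obtain ⟨k, hk, hstab⟩ := exists_succ_le_of_monotone (wordSpan_mono (K := K) v)
  have hpos : 1 ≤ finrank K (wordSpan K v 0) :=
    one_le_finrank_iff.mpr ((Submodule.ne_bot_iff _).mpr ⟨v [], mem_wordSpan le_rfl, h0⟩)
  have hP : wordSpan K v k ≤ P := wordSpan_le_iff.mpr fun u hu => h u (by omega)
  exact hP (mem_wordSpan_of_succ_le hv hstab w)

theorem stmt_16 {α : Type} (n₁ n₂ : ℕ)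
    (init₁ : Fin n₁ → ℝ) (A₁ : α → Matrix (Fin n₁) (Fin n₁) ℝ) (f₁ : Fin n₁ → ℝ)
    (init₂ : Fin n₂ → ℝ) (A₂ : α → Matrix (Fin n₂) (Fin n₂) ℝ) (f₂ : Fin n₂ → ℝ) :
    (∀ w : List α, GFA.value n₁ init₁ A₁ f₁ w = GFA.value n₂ init₂ A₂ f₂ w) ↔
    (∀ w : List α, w.length ≤ n₁ + n₂ - 1 →
      GFA.value n₁ init₁ A₁ f₁ w = GFA.value n₂ init₂ A₂ f₂ w) := by
  refine ⟨fun h w _ => h w, fun h => ?_⟩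
  let v : List α → (Fin n₁ → ℝ) × (Fin n₂ → ℝ) := fun w =>
    ((w.map A₁).reverse.prod *ᵥ init₁, (w.map A₂).reverse.prod *ᵥ init₂)
  let T : α → ((Fin n₁ → ℝ) × (Fin n₂ → ℝ)) →ₗ[ℝ] (Fin n₁ → ℝ) × (Fin n₂ → ℝ) :=
    fun σ => (A₁ σ).mulVecLin.prodMap (A₂ σ).mulVecLin
  -- `v w ∈ P` unfolds to the equality of the two values on `w`.
  let P : Submodule ℝ ((Fin n₁ → ℝ) × (Fin n₂ → ℝ)) :=
    LinearMap.eqLocus (dotProductBilin ℝ ℝ f₁ ∘ₗ LinearMap.fst ℝ _ _)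
      (dotProductBilin ℝ ℝ f₂ ∘ₗ LinearMap.snd ℝ _ _)
  have hv : ∀ w σ, v (w ++ [σ]) = T σ (v w) := fun w σ => by
    simp [v, T, mulVec_mulVec]
  have hdim : finrank ℝ ((Fin n₁ → ℝ) × (Fin n₂ → ℝ)) = n₁ + n₂ := by
    rw [finrank_prod, finrank_fin_fun, finrank_fin_fun]
  exact fun w => forall_mem_of_forall_length_le (P := P) hv
    (fun u hu => h u (hdim ▸ hu)) w
end
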